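/- The multiplication operator M_ψ is an isometry on S^2 if and only if ψ is a constant function of modulus one. -/

import Mathlib

/-!
Testing the isometry on `1` and on `z` gives `‖ψ‖ = ‖zψ‖ = 1`. Multiplication by `z` shifts
the Taylor coefficients `aₖ` of `ψ`, so `‖zψ‖² = Σₖ (k+1)² |aₖ|²` while
`‖ψ‖² = |a₀|² + Σ_{k≥1} k² |aₖ|²`: the weight of every `aₖ` with `k ≥ 1` strictly increases,
hence all of them vanish and `ψ = a₀` with `|a₀| = 1`. Conversely, a unimodular constant
multiplies every coefficient by a unimodular factor.
-/

open Metric Filter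

noncomputable def taylorCoeff (f : ℂ → ℂ) (n : ℕ) : ℂ :=
  iteratedDeriv n f 0 / n.factorial

/-- Membership in `S²`: `f` is analytic on the open unit disk, equals its Taylor
series there, and its coefficients satisfy `Σ n² |a n|² < ∞`. -/
def MemS2 (f : ℂ → ℂ) : Prop :=
  AnalyticOn ℂ f (ball (0:ℂ) 1) ∧
  (∀ z ∈ ball (0:ℂ) 1, HasSum (fun n : ℕ => taylorCoeff f n * z ^ n) (f z)) ∧
  Summable (fun n : ℕ => ((n : ℝ))^2 * ‖taylorCoeff f n‖^2)

/-- The square of the `S²` norm: `|a₀|² + Σ_{n≥1} n² |aₙ|²`. -/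
noncomputable def s2NormSq (f : ℂ → ℂ) : ℝ :=
  ‖taylorCoeff f 0‖^2 + ∑' n : ℕ, ((n : ℝ) + 1)^2 * ‖taylorCoeff f (n+1)‖^2

noncomputable def s2Norm (f : ℂ → ℂ) : ℝ := Real.sqrt (s2NormSq f)

/-- The square of the `H²` norm, in terms of Taylor coefficients. -/
noncomputable def h2NormSq (f : ℂ → ℂ) : ℝ := ∑' n : ℕ, ‖taylorCoeff f n‖^2

noncomputable def h2Norm (f : ℂ → ℂ) : ℝ := Real.sqrt (h2NormSq f)

/-- An operator on functions is bounded on `S²`. -/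
def BoundedOpS2 (T : (ℂ → ℂ) → (ℂ → ℂ)) : Prop :=
  (∀ f, MemS2 f → MemS2 (T f)) ∧
  ∃ C : ℝ, ∀ f, MemS2 f → s2Norm (T f) ≤ C * s2Norm f

/-- The operator norm of an operator on `S²`. -/
noncomputable def opNormS2 (T : (ℂ → ℂ) → (ℂ → ℂ)) : ℝ :=
  sInf {C : ℝ | 0 ≤ C ∧ ∀ f, MemS2 f → s2Norm (T f) ≤ C * s2Norm f}

/-- An (analytic) automorphism of the unit disk. -/
def IsDiskAut (φ : ℂ → ℂ) : Prop :=
  AnalyticOn ℂ φ (ball (0:ℂ) 1) ∧ Set.BijOn φ (ball (0:ℂ) 1) (ball (0:ℂ) 1)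

open Topology FormalMultilinearSeries

variable {f ψ : ℂ → ℂ}

theorem taylorCoeff_eq_of_hasSum {a : ℕ → ℂ}
    (h : ∀ᶠ z in 𝓝 0, HasSum (fun n => a n * z ^ n) (f z)) : taylorCoeff f = a := by
  have ha : HasFPowerSeriesAt f (ofScalars ℂ a) 0 :=
    hasFPowerSeriesAt_iff.mpr <| by simpa [mul_comm] using h
  funext n
  simpa [taylorCoeff] using
    congrArg (·.coeff n) (ha.analyticAt.hasFPowerSeriesAt.eq_formalMultilinearSeries ha)

theorem MemS2.hasSum_nhds (hf : MemS2 f) :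
    ∀ᶠ z in 𝓝 0, HasSum (fun n => taylorCoeff f n * z ^ n) (f z) :=
  eventually_of_mem (ball_mem_nhds 0 one_pos) hf.2.1

theorem hasSum_single_one_mul_pow (k : ℕ) (z : ℂ) :
    HasSum (fun n => (Pi.single k 1 : ℕ → ℂ) n * z ^ n) (z ^ k) := by
  simpa using hasSum_single (f := fun n => (Pi.single k 1 : ℕ → ℂ) n * z ^ n) k
    fun n hn => by simp [hn]

theorem taylorCoeff_pow (k : ℕ) : taylorCoeff (· ^ k) = Pi.single k 1 :=
  taylorCoeff_eq_of_hasSum <| .of_forall <| hasSum_single_one_mul_pow k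

theorem memS2_pow (k : ℕ) : MemS2 (· ^ k) := by
  refine ⟨analyticOn_id.pow k, fun z _ => ?_, summable_of_ne_finset_zero (s := {k}) ?_⟩
  · simpa [taylorCoeff_pow] using hasSum_single_one_mul_pow k z
  · intro n hn
    simp_all [taylorCoeff_pow]

theorem s2NormSq_pow_zero : s2NormSq (· ^ 0) = 1 := by
  rw [s2NormSq, taylorCoeff_pow]
  simp

theorem s2NormSq_pow {k : ℕ} (hk : k ≠ 0) : s2NormSq (· ^ k) = (k : ℝ) ^ 2 := by
  obtain ⟨k, rfl⟩ := Nat.exists_eq_succ_of_ne_zero hk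
  rw [s2NormSq, taylorCoeff_pow, tsum_eq_single k fun n hn => by simp [hn]]
  simp

theorem s2NormSq_nonneg (f : ℂ → ℂ) : 0 ≤ s2NormSq f :=
  add_nonneg (sq_nonneg _) (tsum_nonneg fun _ => by positivity)

theorem s2Norm_eq_s2Norm_iff {g : ℂ → ℂ} : s2Norm f = s2Norm g ↔ s2NormSq f = s2NormSq g :=
  Real.sqrt_inj (s2NormSq_nonneg f) (s2NormSq_nonneg g)

theorem taylorCoeff_mul_id
    (hf : ∀ᶠ z in 𝓝 0, HasSum (fun n => taylorCoeff f n * z ^ n) (f z)) :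
    taylorCoeff (fun z => f z * z) = fun n => if n = 0 then 0 else taylorCoeff f (n - 1) := by
  refine taylorCoeff_eq_of_hasSum ?_
  filter_upwards [hf] with z hz
  refine (hasSum_nat_add_iff' 1).mp ?_
  simpa [pow_succ, mul_assoc] using hz.mul_right z

theorem s2NormSq_mul_id (hf : MemS2 f) :
    s2NormSq (fun z => f z * z) = ∑' n : ℕ, ((n : ℝ) + 1) ^ 2 * ‖taylorCoeff f n‖ ^ 2 := by
  rw [s2NormSq, taylorCoeff_mul_id hf.hasSum_nhds]
  simp

theorem s2NormSq_lt_s2NormSq_mul_id (hf : MemS2 f) {k : ℕ} (hk : taylorCoeff f (k + 1) ≠ 0) :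
    s2NormSq f < s2NormSq (fun z => f z * z) := by
  set a := taylorCoeff f
  have hsum : Summable fun n : ℕ => ((n : ℝ) + 1) ^ 2 * ‖a (n + 1)‖ ^ 2 := by
    simpa using (summable_nat_add_iff 1).mpr hf.2.2
  have hsum' : Summable fun n : ℕ => (((n + 1 : ℕ) : ℝ) + 1) ^ 2 * ‖a (n + 1)‖ ^ 2 := by
    refine .of_nonneg_of_le (fun _ => by positivity) (fun n => ?_) (hsum.mul_left 4)
    rw [← mul_assoc]
    exact mul_le_mul_of_nonneg_right (by push_cast; nlinarith [n.cast_nonneg (α := ℝ)])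
      (by positivity)
  calc s2NormSq f = ‖a 0‖ ^ 2 + ∑' n : ℕ, ((n : ℝ) + 1) ^ 2 * ‖a (n + 1)‖ ^ 2 := rfl
    _ < ‖a 0‖ ^ 2 + ∑' n : ℕ, (((n + 1 : ℕ) : ℝ) + 1) ^ 2 * ‖a (n + 1)‖ ^ 2 := by
      gcongr
      have hweight (n : ℕ) : ((n : ℝ) + 1) ^ 2 < (((n + 1 : ℕ) : ℝ) + 1) ^ 2 := by
        push_cast
        gcongr
        linarith
      refine Summable.tsum_lt_tsum_of_nonneg (i := k) (fun _ => by positivity)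
        (fun n => mul_le_mul_of_nonneg_right (hweight n).le (by positivity)) ?_ hsum'
      exact mul_lt_mul_of_pos_right (hweight k) (pow_pos (norm_pos_iff.mpr hk) 2)
    _ = s2NormSq (fun z => f z * z) := by
      rw [s2NormSq_mul_id hf,
        tsum_eq_zero_add' (f := fun n : ℕ => ((n : ℝ) + 1) ^ 2 * ‖a n‖ ^ 2) hsum']
      simp [a]

theorem eqOn_ball_of_taylorCoeff_succ_eq_zero (hf : MemS2 f)
    (h : ∀ n, taylorCoeff f (n + 1) = 0) : ∀ z ∈ ball (0 : ℂ) 1, f z = taylorCoeff f 0 :=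
  fun z hz => (hf.2.1 z hz).unique <| by
    simpa using hasSum_single (f := fun n => taylorCoeff f n * z ^ n) 0 fun n hn => by
      obtain ⟨m, rfl⟩ := Nat.exists_eq_succ_of_ne_zero hn
      simp [h]

theorem s2NormSq_mul_of_eqOn_const (hf : MemS2 f) {c : ℂ} (hψ : ∀ z ∈ ball (0 : ℂ) 1, ψ z = c) :
    s2NormSq (fun z => ψ z * f z) = ‖c‖ ^ 2 * s2NormSq f := by
  have hcoeff : taylorCoeff (fun z => ψ z * f z) = fun n => c * taylorCoeff f n := by
    refine taylorCoeff_eq_of_hasSum ?_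
    filter_upwards [ball_mem_nhds (0 : ℂ) one_pos] with z hz
    simpa [hψ z hz, mul_assoc] using (hf.2.1 z hz).mul_left c
  simp only [s2NormSq, hcoeff, norm_mul, mul_pow, mul_left_comm _ (‖c‖ ^ 2), tsum_mul_left]
  ring

theorem multiplication_isometry_iff (ψ : ℂ → ℂ) (hψ : MemS2 ψ) :
    (∀ f : ℂ → ℂ, MemS2 f → s2Norm (fun z => ψ z * f z) = s2Norm f) ↔
      ∃ c : ℂ, ‖c‖ = 1 ∧ ∀ z ∈ ball (0:ℂ) 1, ψ z = c := by
  constructor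
  · intro hiso
    have h_one : s2NormSq ψ = 1 := by
      have := hiso _ (memS2_pow 0)
      rw [s2Norm_eq_s2Norm_iff, s2NormSq_pow_zero] at this
      simpa using this
    have h_id : s2NormSq (fun z => ψ z * z) = 1 := by
      have := hiso _ (memS2_pow 1)
      rw [s2Norm_eq_s2Norm_iff, s2NormSq_pow one_ne_zero] at this
      simpa using this
    have h_succ : ∀ n, taylorCoeff ψ (n + 1) = 0 := fun n => by
      by_contra hn
      exact (s2NormSq_lt_s2NormSq_mul_id hψ hn).ne (h_one.trans h_id.symm)
    have h_const : ‖taylorCoeff ψ 0‖ ^ 2 = 1 := by simpa [s2NormSq, h_succ] using h_one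
    exact ⟨taylorCoeff ψ 0, (pow_eq_one_iff_of_nonneg (norm_nonneg _) two_ne_zero).mp h_const,
      eqOn_ball_of_taylorCoeff_succ_eq_zero hψ h_succ⟩
  · rintro ⟨c, hc, hψc⟩ f hf
    rw [s2Norm_eq_s2Norm_iff, s2NormSq_mul_of_eqOn_const hf hψc, hc, one_pow, one_mul]
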